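/- Let J₀(x) = (1/π) ∫_{-1}^{1} cos(xt)/√(1−t²) dt. Then lim_{M→∞} ∫_0^M J₀(x) dx = 1. -/

import Mathlib

open MeasureTheory Filter Asymptotics Real Set
open scoped Topology

/-- The Bessel function of order zero,
`J₀(x) = (1/π) ∫_{-1}^{1} cos(xt)/√(1−t²) dt`. -/
noncomputable def J0 (x : ℝ) : ℝ :=
  (1 / π) * ∫ t in (-1 : ℝ)..1, Real.cos (x * t) / Real.sqrt (1 - t ^ 2)

/-! Integrating `cos (x t)` over `x ∈ [0, M]` first (Fubini) gives
`∫₀^M J₀ = (1/π) ∫_{-1}^1 M sinc (M t) / √(1 - t²) dt`. Split `1/√(1 - t²) = 1 + t g(t)` with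
`g(t) = (1/√(1 - t²) - 1)/t`, which is integrable on `[-1, 1]` (it is `O(1/√(1 - t²))`). The first
part is `∫_{-M}^M sinc → π` by the Dirichlet integral, computed from
`sinc x = ∫_0^∞ e^{-xt} sin x dt` and Fubini again; the second is `∫ sin (M t) g(t) dt → 0` by the
Riemann–Lebesgue lemma. -/

lemma integral_cos_mul_eq_mul_sinc (M t : ℝ) :
    ∫ x in (0 : ℝ)..M, cos (x * t) = M * sinc (M * t) := by
  rcases eq_or_ne t 0 with rfl | ht
  · simp
  rcases eq_or_ne M 0 with rfl | hM
  · simp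
  rw [intervalIntegral.integral_comp_mul_right cos ht, integral_cos,
    sinc_of_ne_zero (mul_ne_zero hM ht), mul_comm M t]
  simp only [smul_eq_mul, zero_mul, sin_zero, sub_zero]
  field_simp

lemma integral_integral_cos_mul_eq {w : ℝ → ℝ} {a b : ℝ}
    (hw : IntervalIntegrable w volume a b) (M : ℝ) :
    ∫ x in (0 : ℝ)..M, ∫ t in a..b, cos (x * t) * w t
      = ∫ t in a..b, M * sinc (M * t) * w t := by
  rw [intervalIntegral_intervalIntegral_swap]
  · simp_rw [intervalIntegral.integral_mul_const, integral_cos_mul_eq_mul_sinc]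
  · rw [IntegrableOn, Measure.volume_eq_prod, ← Measure.prod_restrict]
    have : IsFiniteMeasure (volume.restrict (uIoc 0 M)) :=
      isFiniteMeasure_restrict.2 measure_Ioc_lt_top.ne
    exact (hw.def'.comp_snd _).bdd_mul (c := 1) (by fun_prop)
      (.of_forall fun z => abs_cos_le_one _)

lemma intervalIntegrable_one_div_sqrt_one_sub_sq :
    IntervalIntegrable (fun t : ℝ => 1 / √(1 - t ^ 2)) volume (-1) 1 := by
  rw [intervalIntegrable_iff_integrableOn_Ioc_of_le (by norm_num)]
  refine intervalIntegral.integrableOn_deriv_of_nonneg continuous_arcsin.continuousOn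
    (fun t ht => hasDerivAt_arcsin ht.1.ne' ht.2.ne) fun t _ => by positivity

lemma integral_J0_eq_integral_mul_sinc_mul (M : ℝ) :
    ∫ x in (0 : ℝ)..M, J0 x
      = (1 / π) * ∫ t in (-1 : ℝ)..1, M * sinc (M * t) * (1 / √(1 - t ^ 2)) := by
  simp_rw [J0, intervalIntegral.integral_const_mul, div_eq_mul_one_div (cos _)]
  rw [integral_integral_cos_mul_eq intervalIntegrable_one_div_sqrt_one_sub_sq]

lemma integrableOn_exp_neg_mul_Ioi {x : ℝ} (hx : 0 < x) :
    IntegrableOn (fun t => exp (-(x * t))) (Ioi 0) := by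
  simpa only [neg_mul] using exp_neg_integrableOn_Ioi 0 hx

lemma integral_exp_neg_mul_Ioi {x : ℝ} (hx : 0 < x) : ∫ t in Ioi (0 : ℝ), exp (-(x * t)) = x⁻¹ := by
  simp_rw [← neg_mul]
  rw [integral_exp_mul_Ioi (neg_lt_zero.2 hx)]
  simp

lemma integral_exp_neg_mul_mul_sin (t M : ℝ) :
    ∫ x in (0 : ℝ)..M, exp (-(x * t)) * sin x
      = (1 - exp (-(M * t)) * (t * sin M + cos M)) / (1 + t ^ 2) := by
  have hderiv : ∀ x, HasDerivAt (fun y => -(exp (-(y * t)) * (t * sin y + cos y)) / (1 + t ^ 2))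
      (exp (-(x * t)) * sin x) x := by
    intro x
    have := ((((hasDerivAt_mul_const t).fun_neg.exp).fun_mul
      (((hasDerivAt_sin x).const_mul t).fun_add (hasDerivAt_cos x))).fun_neg).div_const (1 + t ^ 2)
    refine this.congr_deriv ?_
    field_simp
    ring
  rw [intervalIntegral.integral_eq_sub_of_hasDerivAt (fun x _ => hderiv x)
    (Continuous.intervalIntegrable (by fun_prop) _ _)]
  simp only [zero_mul, neg_zero, exp_zero, sin_zero, mul_zero, cos_zero, zero_add, mul_one]
  ring

lemma integrable_exp_neg_mul_mul_sin {M : ℝ} (hM : 0 ≤ M) :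
    Integrable (Function.uncurry fun x t : ℝ => exp (-(x * t)) * sin x)
      ((volume.restrict (uIoc 0 M)).prod (volume.restrict (Ioi 0))) := by
  rw [uIoc_of_le hM]
  have hmeas : AEStronglyMeasurable (Function.uncurry fun x t : ℝ => exp (-(x * t)) * sin x)
      ((volume.restrict (Ioc 0 M)).prod (volume.restrict (Ioi 0))) := by
    apply Continuous.aestronglyMeasurable
    fun_prop
  refine (integrable_prod_iff hmeas).2 ⟨?_, ?_⟩
  · filter_upwards [ae_restrict_mem measurableSet_Ioc] with x hx
    exact (integrableOn_exp_neg_mul_Ioi hx.1).mul_const (sin x)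
  · -- `∫ t > 0, ‖exp (-(x t)) sin x‖ = |sin x / x| = |sinc x| ≤ 1`
    refine (continuous_sinc.abs.integrableOn_Icc.mono_set Ioc_subset_Icc_self).congr ?_
    filter_upwards [ae_restrict_mem measurableSet_Ioc] with x hx
    simp_rw [Function.uncurry_apply_pair, norm_mul, norm_of_nonneg (exp_pos _).le]
    rw [integral_mul_const, integral_exp_neg_mul_Ioi hx.1, sinc_of_ne_zero hx.1.ne', abs_div,
      abs_of_pos hx.1, norm_eq_abs]
    ring

lemma abs_mul_sin_add_cos_le (t M : ℝ) : |t * sin M + cos M| ≤ 1 + t ^ 2 := by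
  have hlagrange : (t * sin M + cos M) ^ 2 + (t * cos M - sin M) ^ 2 = 1 + t ^ 2 := by
    linear_combination (1 + t ^ 2) * sin_sq_add_cos_sq M
  refine abs_le_of_sq_le_sq ?_ (by positivity)
  nlinarith [sq_nonneg (t * cos M - sin M), sq_nonneg t]

lemma norm_exp_neg_mul_mul_div_le (M t : ℝ) :
    ‖exp (-(M * t)) * (t * sin M + cos M) / (1 + t ^ 2)‖ ≤ exp (-(M * t)) := by
  rw [norm_div, norm_mul, norm_of_nonneg (exp_pos _).le,
    norm_of_nonneg (by positivity : (0 : ℝ) ≤ 1 + t ^ 2),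
    div_le_iff₀ (by positivity)]
  exact mul_le_mul_of_nonneg_left (abs_mul_sin_add_cos_le t M) (exp_pos _).le

-- `∫_M^∞ sinc`, in the form produced by `sinc x = ∫_0^∞ e^{-xt} sin x dt`.
noncomputable def sincTail (M : ℝ) : ℝ :=
  ∫ t in Ioi (0 : ℝ), exp (-(M * t)) * (t * sin M + cos M) / (1 + t ^ 2)

lemma abs_sincTail_le {M : ℝ} (hM : 0 < M) : |sincTail M| ≤ M⁻¹ := by
  rw [← integral_exp_neg_mul_Ioi hM]
  exact norm_integral_le_of_norm_le (integrableOn_exp_neg_mul_Ioi hM)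
    (.of_forall fun t => norm_exp_neg_mul_mul_div_le M t)

lemma integral_sinc_eq_pi_div_two_sub_sincTail {M : ℝ} (hM : 0 < M) :
    ∫ x in (0 : ℝ)..M, sinc x = π / 2 - sincTail M := by
  have hsinc : ∫ x in (0 : ℝ)..M, sinc x
      = ∫ x in (0 : ℝ)..M, ∫ t in Ioi 0, exp (-(x * t)) * sin x := by
    refine intervalIntegral.integral_congr_ae (.of_forall fun x hx => ?_)
    rw [uIoc_of_le hM.le] at hx
    rw [integral_mul_const, integral_exp_neg_mul_Ioi hx.1, sinc_of_ne_zero hx.1.ne']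
    ring
  have htail : IntegrableOn (fun t => exp (-(M * t)) * (t * sin M + cos M) / (1 + t ^ 2)) (Ioi 0) :=
    (integrableOn_exp_neg_mul_Ioi hM).mono'
      ((by fun_prop : Continuous _).div (by fun_prop) fun t => by positivity).aestronglyMeasurable
      (.of_forall fun t => norm_exp_neg_mul_mul_div_le M t)
  rw [hsinc, intervalIntegral_integral_swap (integrable_exp_neg_mul_mul_sin hM.le)]
  simp_rw [integral_exp_neg_mul_mul_sin, sub_div, one_div]
  rw [integral_sub integrable_inv_one_add_sq.integrableOn htail, integral_Ioi_inv_one_add_sq,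
    arctan_zero, sub_zero, sincTail]

lemma tendsto_integral_sinc_atTop :
    Tendsto (fun M => ∫ x in (0 : ℝ)..M, sinc x) atTop (𝓝 (π / 2)) := by
  have hlim : Tendsto (fun M => π / 2 - sincTail M) atTop (𝓝 (π / 2 - 0)) :=
    tendsto_const_nhds.sub <| squeeze_zero_norm'
      (eventually_gt_atTop 0 |>.mono fun M hM => abs_sincTail_le hM) tendsto_inv_atTop_zero
  rw [sub_zero] at hlim
  exact hlim.congr' <| (eventually_gt_atTop 0).mono fun M hM =>
    (integral_sinc_eq_pi_div_two_sub_sincTail hM).symm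

lemma integral_neg_to_self_of_even {E : Type*} [NormedAddCommGroup E] [NormedSpace ℝ E]
    {f : ℝ → E} (heven : ∀ x, f (-x) = f x) {r : ℝ} (hf : IntervalIntegrable f volume (-r) r) :
    ∫ x in -r..r, f x = (2 : ℝ) • ∫ x in (0 : ℝ)..r, f x := by
  have h0 : (0 : ℝ) ∈ uIcc (-r) r := by
    rcases le_total 0 r with h | h <;> simp [h]
  have hleft : ∫ x in -r..0, f x = ∫ x in (0 : ℝ)..r, f x := by
    simpa [heven] using (intervalIntegral.integral_comp_neg (a := 0) (b := r) f).symm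
  rw [← intervalIntegral.integral_add_adjacent_intervals (hf.mono_set (uIcc_subset_uIcc_left h0))
    (hf.mono_set (uIcc_subset_uIcc_right h0)), hleft, two_smul]

lemma integral_mul_sinc_mul (M : ℝ) :
    ∫ t in (-1 : ℝ)..1, M * sinc (M * t) = 2 * ∫ x in (0 : ℝ)..M, sinc x := by
  rw [intervalIntegral.integral_const_mul, ← smul_eq_mul,
    intervalIntegral.smul_integral_comp_mul_left, mul_neg_one, mul_one,
    integral_neg_to_self_of_even sinc_neg (continuous_sinc.intervalIntegrable _ _), smul_eq_mul]

lemma tendsto_integral_mul_sinc_mul_atTop :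
    Tendsto (fun M => ∫ t in (-1 : ℝ)..1, M * sinc (M * t)) atTop (𝓝 π) := by
  simp_rw [integral_mul_sinc_mul]
  simpa [mul_div_cancel₀] using tendsto_integral_sinc_atTop.const_mul 2

lemma tendsto_integral_sin_mul_cocompact {f : ℝ → ℝ} (hf : Integrable f) :
    Tendsto (fun M => ∫ t, sin (M * t) * f t) (cocompact ℝ) (𝓝 0) := by
  have hscale : Tendsto (fun M : ℝ => M * (2 * π)⁻¹) (cocompact ℝ) (cocompact ℝ) :=
    (Homeomorph.mulRight₀ _ (by positivity)).isClosedEmbedding.tendsto_cocompact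
  have hfourier : ∀ M, ∫ t, sin (M * t) * f t
      = -(FourierTransform.fourier (fun t => (f t : ℂ)) (M * (2 * π)⁻¹)).im := by
    intro M
    simp_rw [Real.fourier_real_eq_integral_exp_smul, smul_eq_mul]
    rw [← RCLike.im_eq_complex_im, ← integral_im, ← integral_neg]
    · congr 1 with t
      have harg : -2 * π * t * (M * (2 * π)⁻¹) = -(M * t) := by field_simp
      rw [harg, RCLike.im_eq_complex_im, Complex.mul_im, Complex.exp_ofReal_mul_I_re,
        Complex.exp_ofReal_mul_I_im, sin_neg]
      simp
    · exact hf.ofReal.bdd_mul (c := 1) (by fun_prop) (.of_forall fun t => by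
        rw [Complex.norm_exp_ofReal_mul_I])
  simp_rw [hfourier]
  simpa using ((Complex.continuous_im.tendsto 0).comp
    ((Real.zero_at_infty_fourier _).comp hscale)).neg

lemma tendsto_intervalIntegral_sin_mul_cocompact {f : ℝ → ℝ} {a b : ℝ}
    (hf : IntervalIntegrable f volume a b) :
    Tendsto (fun M => ∫ t in a..b, sin (M * t) * f t) (cocompact ℝ) (𝓝 0) := by
  simp_rw [intervalIntegral.intervalIntegral_eq_integral_uIoc,
    ← integral_indicator measurableSet_uIoc, indicator_mul_right]
  simpa using ((tendsto_integral_sin_mul_cocompact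
    ((integrable_indicator_iff measurableSet_uIoc).2 hf.def')).const_smul
    (if a ≤ b then (1 : ℝ) else -1))

lemma abs_one_div_sqrt_one_sub_sq_sub_one_div_le {t : ℝ} (ht : t ∈ Ioo (-1 : ℝ) 1) :
    |(1 / √(1 - t ^ 2) - 1) / t| ≤ 1 / √(1 - t ^ 2) := by
  rcases eq_or_ne t 0 with rfl | ht0
  · simp
  have hpos : 0 < 1 - t ^ 2 := by nlinarith [ht.1, ht.2]
  set s := √(1 - t ^ 2)
  have hs_pos : 0 < s := sqrt_pos.2 hpos
  have hs_sq : s ^ 2 = 1 - t ^ 2 := sq_sqrt hpos.le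
  have hs_le : s ≤ 1 := sqrt_le_one.2 (by nlinarith)
  have habs : |t| ≤ 1 := abs_le.2 ⟨ht.1.le, ht.2.le⟩
  -- `1 - s ≤ 1 - s ^ 2 = t ^ 2 ≤ |t|`
  have hkey : 1 - s ≤ |t| := by nlinarith [sq_abs t, abs_nonneg t]
  rw [abs_div, abs_of_nonneg (by rw [sub_nonneg, le_div_iff₀ hs_pos]; linarith),
    div_le_iff₀ (abs_pos.2 ht0), div_sub_one hs_pos.ne', div_mul_eq_mul_div]
  exact div_le_div_of_nonneg_right (by linarith) hs_pos.le

lemma intervalIntegrable_one_div_sqrt_one_sub_sq_sub_one_div :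
    IntervalIntegrable (fun t : ℝ => (1 / √(1 - t ^ 2) - 1) / t) volume (-1) 1 := by
  have hw := intervalIntegrable_one_div_sqrt_one_sub_sq
  rw [intervalIntegrable_iff_integrableOn_Ioo_of_le (by norm_num)] at hw ⊢
  refine hw.mono' (by fun_prop : Measurable _).aestronglyMeasurable ?_
  filter_upwards [ae_restrict_mem measurableSet_Ioo] with t ht
  exact abs_one_div_sqrt_one_sub_sq_sub_one_div_le ht

lemma mul_sinc_mul_mul_one_div_sqrt (M t : ℝ) :
    M * sinc (M * t) * (1 / √(1 - t ^ 2))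
      = M * sinc (M * t) + sin (M * t) * ((1 / √(1 - t ^ 2) - 1) / t) := by
  rcases eq_or_ne t 0 with rfl | ht
  · simp
  rcases eq_or_ne M 0 with rfl | hM
  · simp
  rw [sinc_of_ne_zero (mul_ne_zero hM ht)]
  field_simp
  ring

/-- **Appendix (Pinsky).** `lim_{M→∞} ∫_0^M J₀(x) dx = 1`. -/
theorem integral_J0_tendsto_one :
    Tendsto (fun M : ℝ => ∫ x in (0 : ℝ)..M, J0 x) atTop (𝓝 1) := by
  have hsplit : ∀ M : ℝ, ∫ x in (0 : ℝ)..M, J0 x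
      = (1 / π) * ((∫ t in (-1 : ℝ)..1, M * sinc (M * t))
        + ∫ t in (-1 : ℝ)..1, sin (M * t) * ((1 / √(1 - t ^ 2) - 1) / t)) := fun M => by
    have hsinc : IntervalIntegrable (fun t => M * sinc (M * t)) volume (-1) 1 :=
      ((continuous_sinc.comp (continuous_const_mul M)).const_mul M).intervalIntegrable _ _
    rw [integral_J0_eq_integral_mul_sinc_mul, ← intervalIntegral.integral_add hsinc
      (intervalIntegrable_one_div_sqrt_one_sub_sq_sub_one_div.continuousOn_mul (by fun_prop))]
    simp_rw [mul_sinc_mul_mul_one_div_sqrt]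
  have hriemannLebesgue := (tendsto_intervalIntegral_sin_mul_cocompact
    intervalIntegrable_one_div_sqrt_one_sub_sq_sub_one_div).mono_left atTop_le_cocompact
  have hlim := (tendsto_integral_mul_sinc_mul_atTop.add hriemannLebesgue).const_mul (1 / π)
  rw [add_zero, one_div_mul_cancel pi_ne_zero] at hlim
  simpa only [hsplit] using hlim
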